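/- Let α > 2 and c > 0 be real numbers and define f(s) = (c s)^{2/α} γ(1 − 2/α, c s) for s > 0. Then f is differentiable on (0, ∞), and its derivative f′(s) tends to c α/(α − 2) as s → 0⁺. (This is equation (G21) in Appendix C, used to compute the mean received power from the Laplace transform.) -/

import Mathlib

/-! Write `f c α s = g (c s)` with `g x = x ^ a * γ(1 - a, x)` and `a = 2/α ∈ (0, 1)`. Then
`g' x = a x ^ (a - 1) γ(1 - a, x) + e^{-x}`, and squeezing the integrand of `γ(1 - a, x)` between
`t ^ (-a) e^{-x}` and `t ^ (-a)` gives `x ^ (a - 1) γ(1 - a, x) → 1/(1 - a)` as `x → 0⁺`.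
Hence `g' x → a/(1 - a) + 1 = 1/(1 - a)` and `f' s = c g'(c s) → c/(1 - 2/α) = c α/(α - 2)`. -/

/-- The lower incomplete gamma function γ(s, x) = ∫_0^x t^(s-1) e^(-t) dt. -/
noncomputable def lowerGamma (s x : ℝ) : ℝ := ∫ t in (0:ℝ)..x, t ^ (s - 1) * Real.exp (-t)

/-- f(s) = (c s)^(2/α) · γ(1 − 2/α, c s). -/
noncomputable def f (c α s : ℝ) : ℝ := (c * s) ^ (2/α) * lowerGamma (1 - 2/α) (c * s)

open Real Filter Set MeasureTheory Topology

lemma intervalIntegrable_rpow_mul_exp_neg {r : ℝ} (hr : -1 < r) (x y : ℝ) :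
    IntervalIntegrable (fun t => t ^ r * exp (-t)) volume x y :=
  (intervalIntegral.intervalIntegrable_rpow' hr).mul_continuousOn (by fun_prop)

lemma integral_rpow_sub_one {s x : ℝ} (hs : 0 < s) :
    ∫ t in (0:ℝ)..x, t ^ (s - 1) = x ^ s / s := by
  rw [integral_rpow (Or.inl (by linarith)), sub_add_cancel, zero_rpow hs.ne', sub_zero]

lemma hasDerivAt_lowerGamma {s x : ℝ} (hs : 0 < s) (hx : 0 < x) :
    HasDerivAt (lowerGamma s) (x ^ (s - 1) * exp (-x)) x := by
  have hcont : ContinuousOn (fun t : ℝ => t ^ (s - 1) * exp (-t)) (Ioi 0) := fun t ht =>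
    ((continuousAt_rpow_const t (s - 1) (Or.inl (ne_of_gt ht))).mul
      (by fun_prop)).continuousWithinAt
  exact intervalIntegral.integral_hasDerivAt_right
    (intervalIntegrable_rpow_mul_exp_neg (by linarith) 0 x)
    (hcont.stronglyMeasurableAtFilter isOpen_Ioi x hx)
    (hcont.continuousAt (isOpen_Ioi.mem_nhds hx))

lemma lowerGamma_le {s x : ℝ} (hs : 0 < s) (hx : 0 ≤ x) : lowerGamma s x ≤ x ^ s / s := by
  rw [← integral_rpow_sub_one hs]
  refine intervalIntegral.integral_mono_on hx
    (intervalIntegrable_rpow_mul_exp_neg (by linarith) 0 x)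
    (intervalIntegral.intervalIntegrable_rpow' (by linarith)) fun t ht => ?_
  exact mul_le_of_le_one_right (rpow_nonneg ht.1 _) (exp_le_one_iff.mpr (by linarith [ht.1]))

lemma exp_neg_mul_le_lowerGamma {s x : ℝ} (hs : 0 < s) (hx : 0 ≤ x) :
    exp (-x) * (x ^ s / s) ≤ lowerGamma s x := by
  rw [← integral_rpow_sub_one hs, ← intervalIntegral.integral_const_mul]
  refine intervalIntegral.integral_mono_on hx
    ((intervalIntegral.intervalIntegrable_rpow' (by linarith)).const_mul _)
    (intervalIntegrable_rpow_mul_exp_neg (by linarith) 0 x) fun t ht => ?_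
  rw [mul_comm]
  exact mul_le_mul_of_nonneg_left (exp_le_exp.mpr (by linarith [ht.2])) (rpow_nonneg ht.1 _)

lemma tendsto_rpow_neg_mul_lowerGamma {s : ℝ} (hs : 0 < s) :
    Tendsto (fun x => x ^ (-s) * lowerGamma s x) (𝓝[>] 0) (𝓝 (1 / s)) := by
  have hcancel : ∀ x : ℝ, 0 < x → x ^ (-s) * (x ^ s / s) = 1 / s := fun x hx => by
    rw [mul_div_assoc', rpow_neg hx.le, inv_mul_cancel₀ (rpow_pos_of_pos hx s).ne']
  have hlower : Tendsto (fun x : ℝ => exp (-x) * (1 / s)) (𝓝[>] 0) (𝓝 (1 / s)) := by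
    have : Tendsto (fun x : ℝ => exp (-x) * (1 / s)) (𝓝 0) (𝓝 (1 / s)) := by
      simpa using (by fun_prop : Continuous fun x : ℝ => exp (-x) * (1 / s)).tendsto 0
    exact this.mono_left nhdsWithin_le_nhds
  refine tendsto_of_tendsto_of_tendsto_of_le_of_le' hlower tendsto_const_nhds ?_ ?_ <;>
    filter_upwards [self_mem_nhdsWithin] with x (hx : 0 < x)
  · have := mul_le_mul_of_nonneg_left (exp_neg_mul_le_lowerGamma hs hx.le)
      (rpow_pos_of_pos hx (-s)).le
    rwa [mul_left_comm, hcancel x hx] at this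
  · have := mul_le_mul_of_nonneg_left (lowerGamma_le hs hx.le) (rpow_pos_of_pos hx (-s)).le
    rwa [hcancel x hx] at this

lemma hasDerivAt_rpow_mul_lowerGamma {a x : ℝ} (ha : a < 1) (hx : 0 < x) :
    HasDerivAt (fun x => x ^ a * lowerGamma (1 - a) x)
      (a * (x ^ (a - 1) * lowerGamma (1 - a) x) + exp (-x)) x := by
  have h := (hasDerivAt_rpow_const (p := a) (Or.inl hx.ne')).mul
    (hasDerivAt_lowerGamma (sub_pos.mpr ha) hx)
  refine h.congr_deriv ?_
  have hpow : x ^ a * x ^ (1 - a - 1) = 1 := by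
    rw [← rpow_add hx]
    norm_num
  rw [← mul_assoc, hpow]
  ring

lemma tendsto_deriv_rpow_mul_lowerGamma {a : ℝ} (ha : a < 1) :
    Tendsto (fun x => a * (x ^ (a - 1) * lowerGamma (1 - a) x) + exp (-x)) (𝓝[>] 0)
      (𝓝 (1 / (1 - a))) := by
  have hγ : Tendsto (fun x => x ^ (a - 1) * lowerGamma (1 - a) x) (𝓝[>] 0)
      (𝓝 (1 / (1 - a))) := by
    simpa only [neg_sub] using tendsto_rpow_neg_mul_lowerGamma (sub_pos.mpr ha)
  have hexp : Tendsto (fun x : ℝ => exp (-x)) (𝓝[>] 0) (𝓝 1) := by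
    have : Tendsto (fun x : ℝ => exp (-x)) (𝓝 0) (𝓝 1) := by
      simpa using (by fun_prop : Continuous fun x : ℝ => exp (-x)).tendsto 0
    exact this.mono_left nhdsWithin_le_nhds
  convert (hγ.const_mul a).add hexp using 2
  field_simp [(sub_pos.mpr ha).ne']
  ring

theorem stmt_3 (α c : ℝ) (hα : 2 < α) (hc : 0 < c) :
    (∀ s ∈ Set.Ioi (0:ℝ), DifferentiableAt ℝ (f c α) s) ∧
    Filter.Tendsto (deriv (f c α)) (nhdsWithin 0 (Set.Ioi 0))
      (nhds (c * α / (α - 2))) := by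
  have ha : 2 / α < 1 := by rw [div_lt_one (by linarith)]; linarith
  set G := fun x => 2 / α * (x ^ (2 / α - 1) * lowerGamma (1 - 2 / α) x) + exp (-x)
  have hderiv : ∀ s : ℝ, 0 < s → HasDerivAt (f c α) (G (c * s) * c) s := fun s hs =>
    (hasDerivAt_rpow_mul_lowerGamma ha (mul_pos hc hs)).comp s (hasDerivAt_const_mul c)
  refine ⟨fun s hs => (hderiv s hs).differentiableAt, ?_⟩
  have hscale : Tendsto (c * ·) (𝓝[>] 0) (𝓝[>] 0) :=
    tendsto_iff_comap.2 (comap_mulLeft_nhdsGT_zero hc).ge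
  have hlim := ((tendsto_deriv_rpow_mul_lowerGamma ha).comp hscale).mul_const c
  have hval : 1 / (1 - 2 / α) * c = c * α / (α - 2) := by
    field_simp [(by linarith : α - 2 ≠ 0), (by linarith : α ≠ 0)]
  rw [hval] at hlim
  refine hlim.congr' ?_
  filter_upwards [self_mem_nhdsWithin] with s (hs : 0 < s)
  exact (hderiv s hs).deriv.symm
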